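/- arXiv:1909.01675 — 3 statements merged into one kernel-verified Lean document; each statement's English description precedes it below -/
import Mathlib

section
/- The eigenvalues of the Gram matrix {∫_0^1 B_{ℓ₁,L}(x) B_{ℓ₂,L}(x) dx}_{ℓ₁,ℓ₂=0}^{L} of the Bernstein basis polynomials of degree L on [0,1] are λ_k = (1/(2L+1)) · C(2L+1, L−k) / C(2L, L) for k = 0,…,L. -/
open intervalIntegral Polynomial Finset

/-- The `ℓ`-th Bernstein basis polynomial of degree `L` on `[0,1]`. -/
noncomputable def bern (L ℓ : ℕ) (x : ℝ) : ℝ :=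
  (L.choose ℓ : ℝ) * (1 - x) ^ (L - ℓ) * x ^ ℓ

lemma beta_nat (a b : ℕ) :
    ∫ x in (0:ℝ)..1, x ^ b * (1 - x) ^ a
      = (b.factorial : ℝ) * a.factorial / (b + a + 1).factorial := by
  have hs : (0:ℝ) < Complex.re ((b:ℂ) + 1) := by simp; positivity
  have ht : (0:ℝ) < Complex.re ((a:ℂ) + 1) := by simp; positivity
  have h := Complex.Gamma_mul_Gamma_eq_betaIntegral hs ht
  have hG1 : Complex.Gamma ((b:ℂ) + 1) = (b.factorial : ℂ) := by
    exact_mod_cast Complex.Gamma_nat_eq_factorial b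
  have hG2 : Complex.Gamma ((a:ℂ) + 1) = (a.factorial : ℂ) := by
    exact_mod_cast Complex.Gamma_nat_eq_factorial a
  have hG3 : Complex.Gamma (((b:ℂ) + 1) + ((a:ℂ) + 1)) = ((b + a + 1).factorial : ℂ) := by
    have : ((b:ℂ) + 1) + ((a:ℂ) + 1) = ((b + a + 1 : ℕ) : ℂ) + 1 := by push_cast; ring
    rw [this]
    exact_mod_cast Complex.Gamma_nat_eq_factorial (b + a + 1)
  have hbeta : Complex.betaIntegral ((b:ℂ) + 1) ((a:ℂ) + 1)
      = ((∫ x in (0:ℝ)..1, x ^ b * (1 - x) ^ a : ℝ) : ℂ) := by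
    rw [Complex.betaIntegral, ← intervalIntegral.integral_ofReal]
    apply intervalIntegral.integral_congr
    intro x _
    have h1 : ((b:ℂ) + 1) - 1 = ((b : ℕ) : ℂ) := by ring
    have h2 : ((a:ℂ) + 1) - 1 = ((a : ℕ) : ℂ) := by ring
    dsimp only
    rw [h1, h2, Complex.cpow_natCast, Complex.cpow_natCast]
    push_cast
    ring
  rw [hG1, hG2, hG3, hbeta] at h
  have hne : ((b + a + 1).factorial : ℂ) ≠ 0 := by
    exact Nat.cast_ne_zero.mpr (Nat.factorial_ne_zero _)
  have : ((∫ x in (0:ℝ)..1, x ^ b * (1 - x) ^ a : ℝ) : ℂ)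
      = ((b.factorial : ℝ) * a.factorial / (b + a + 1).factorial : ℝ) := by
    push_cast
    rw [eq_div_iff hne]
    linear_combination -h
  exact_mod_cast this

open Polynomial Finset

lemma bern_continuous (L ℓ : ℕ) : Continuous (bern L ℓ) := by
  unfold bern; fun_prop

/-- Similar matrices have the same characteristic polynomial. -/
lemma charpoly_similar {n : Type*} [DecidableEq n] [Fintype n] (P M : Matrix n n ℝ)
    (hP : IsUnit P.det) : (P * M * P⁻¹).charpoly = M.charpoly := by
  have hPQ : P * P⁻¹ = 1 := Matrix.mul_nonsing_inv P hP
  set F : Matrix n n ℝ →+* Matrix n n ℝ[X] := (C : ℝ →+* ℝ[X]).mapMatrix with hF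
  have hsc : ∀ Q : Matrix n n ℝ[X],
      Q * Matrix.scalar n (X : ℝ[X]) = Matrix.scalar n (X : ℝ[X]) * Q := by
    intro Q
    exact ((Matrix.scalar_commute (X : ℝ[X]) (fun r => Commute.all _ _) Q).eq).symm
  have key : (P * M * P⁻¹).charmatrix = F P * M.charmatrix * F P⁻¹ := by
    rw [Matrix.charmatrix, Matrix.charmatrix, Matrix.mul_sub, Matrix.sub_mul]
    congr 1
    · rw [hsc (F P), Matrix.mul_assoc, ← map_mul, hPQ, map_one, Matrix.mul_one]
    · rw [← map_mul, ← map_mul]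
  have hdet : (F P).det * (F P⁻¹).det = 1 := by
    rw [← Matrix.det_mul, ← map_mul, hPQ]; simp
  rw [Matrix.charpoly, Matrix.charpoly, key, Matrix.det_mul, Matrix.det_mul]
  calc (F P).det * M.charmatrix.det * (F P⁻¹).det
      = ((F P).det * (F P⁻¹).det) * M.charmatrix.det := by ring
    _ = M.charmatrix.det := by rw [hdet, one_mul]

lemma key1 (ℓ j L : ℕ) (hj : j ≤ L) :
    ∑ i ∈ Finset.range (L + 1), ℓ.choose i * j.choose i = (ℓ + j).choose j := by
  rw [Nat.add_choose_eq, Finset.Nat.sum_antidiagonal_eq_sum_range_succ_mk]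
  have hsub : Finset.range (j + 1) ⊆ Finset.range (L + 1) :=
    Finset.range_subset_range.mpr (by omega)
  rw [← Finset.sum_subset hsub (by
    intro i _ hi
    simp only [Finset.mem_range, not_lt] at hi
    rw [Nat.choose_eq_zero_of_lt (by omega : j < i), mul_zero])]
  apply Finset.sum_congr rfl
  intro i hi
  simp only [Finset.mem_range] at hi
  rw [Nat.choose_symm (by omega : i ≤ j)]

lemma key2 (L ℓ j : ℕ) (h : ℓ ≤ L) :
    (ℓ + j).choose j * L.factorial * j.factorial
      = L.choose ℓ * (L - ℓ).factorial * (ℓ + j).factorial := by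
  apply Nat.eq_of_mul_eq_mul_right (Nat.factorial_pos ℓ)
  have h1 := Nat.add_choose_mul_factorial_mul_factorial ℓ j
  have h2 := Nat.choose_mul_factorial_mul_factorial h
  calc (ℓ + j).choose j * L.factorial * j.factorial * ℓ.factorial
      = ((ℓ + j).choose j * ℓ.factorial * j.factorial) * L.factorial := by ring
    _ = (ℓ + j).factorial * L.factorial := by
        rw [h1]
    _ = (L.choose ℓ * ℓ.factorial * (L - ℓ).factorial) * (ℓ + j).factorial := by rw [h2]; ring
    _ = L.choose ℓ * (L - ℓ).factorial * (ℓ + j).factorial * ℓ.factorial := by ring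

lemma key3 (L k : ℕ) (h : k ≤ L) :
    L.choose k * L.factorial * k.factorial * ((2 * L + 1) * (2 * L).choose L)
      = (2 * L + 1).choose (L - k) * (L + k + 1).factorial := by
  apply Nat.eq_of_mul_eq_mul_right
    (show 0 < (L - k).factorial * (L.factorial * L.factorial) by positivity)
  have h1 := Nat.choose_mul_factorial_mul_factorial h
  have h2 : (2 * L).choose L * L.factorial * L.factorial = (2 * L).factorial := by
    have := Nat.choose_mul_factorial_mul_factorial (show L ≤ 2 * L by omega)
    rwa [show 2 * L - L = L from by omega] at this
  have h3 : (2 * L + 1).choose (L - k) * (L - k).factorial * (L + k + 1).factorial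
      = (2 * L + 1).factorial := by
    have := Nat.choose_mul_factorial_mul_factorial (show L - k ≤ 2 * L + 1 by omega)
    rwa [show 2 * L + 1 - (L - k) = L + k + 1 from by omega] at this
  have h4 : (2 * L + 1).factorial = (2 * L + 1) * (2 * L).factorial := Nat.factorial_succ _
  calc L.choose k * L.factorial * k.factorial * ((2 * L + 1) * (2 * L).choose L)
        * ((L - k).factorial * (L.factorial * L.factorial))
      = (L.choose k * k.factorial * (L - k).factorial) * L.factorial * (2 * L + 1)
        * ((2 * L).choose L * L.factorial * L.factorial) := by ring
    _ = L.factorial * L.factorial * (2 * L + 1) * (2 * L).factorial := by rw [h1, h2]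
    _ = L.factorial * L.factorial * (2 * L + 1).factorial := by rw [h4]; ring
    _ = ((2 * L + 1).choose (L - k) * (L - k).factorial * (L + k + 1).factorial)
        * (L.factorial * L.factorial) := by rw [h3]; ring
    _ = (2 * L + 1).choose (L - k) * (L + k + 1).factorial
        * ((L - k).factorial * (L.factorial * L.factorial)) := by ring

lemma sum_bern (L j : ℕ) (hj : j ≤ L) (x : ℝ) :
    ∑ ℓ ∈ Finset.range (L + 1), (ℓ.choose j : ℝ) * bern L ℓ x
      = (L.choose j : ℝ) * x ^ j := by
  have hsub : Finset.Ico j (L + 1) ⊆ Finset.range (L + 1) := by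
    intro t ht
    simp only [Finset.mem_Ico] at ht
    simp only [Finset.mem_range]
    omega
  rw [← Finset.sum_subset hsub (by
    intro i hi hni
    simp only [Finset.mem_range] at hi
    simp only [Finset.mem_Ico, not_and, not_lt] at hni
    have : i < j := by by_contra hc; push_neg at hc; exact absurd hi (by omega)
    rw [Nat.choose_eq_zero_of_lt this]
    simp)]
  rw [Finset.sum_Ico_eq_sum_range]
  have hstep : ∀ m ∈ Finset.range (L + 1 - j),
      ((j + m).choose j : ℝ) * bern L (j + m) x
        = (L.choose j : ℝ) * x ^ j
            * (x ^ m * (1 - x) ^ (L - j - m) * ((L - j).choose m : ℝ)) := by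
    intro m hm
    simp only [Finset.mem_range] at hm
    have hjm : j + m ≤ L := by omega
    have hcc : L.choose (j + m) * (j + m).choose j = L.choose j * (L - j).choose m := by
      have := Nat.choose_mul (n := L) (show j ≤ j + m by omega)
      rwa [show j + m - j = m from by omega] at this
    unfold bern
    have hexp : L - (j + m) = L - j - m := by omega
    rw [hexp, pow_add]
    calc ((j + m).choose j : ℝ) * ((L.choose (j + m) : ℝ) * (1 - x) ^ (L - j - m)
            * (x ^ j * x ^ m))
        = ((L.choose (j + m) * (j + m).choose j : ℕ) : ℝ)
            * ((1 - x) ^ (L - j - m) * (x ^ j * x ^ m)) := by push_cast; ring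
      _ = ((L.choose j * (L - j).choose m : ℕ) : ℝ)
            * ((1 - x) ^ (L - j - m) * (x ^ j * x ^ m)) := by rw [hcc]
      _ = (L.choose j : ℝ) * x ^ j
            * (x ^ m * (1 - x) ^ (L - j - m) * ((L - j).choose m : ℝ)) := by push_cast; ring
  rw [Finset.sum_congr rfl hstep, ← Finset.mul_sum]
  have hpow : ∑ m ∈ Finset.range (L + 1 - j),
      x ^ m * (1 - x) ^ (L - j - m) * ((L - j).choose m : ℝ) = 1 := by
    have := add_pow x (1 - x) (L - j)
    rw [show x + (1 - x) = 1 from by ring, one_pow] at this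
    rw [show L + 1 - j = (L - j) + 1 from by omega]
    exact this.symm
  rw [hpow, mul_one]
noncomputable def Smat (L : ℕ) : Matrix (Fin (L+1)) (Fin (L+1)) ℝ :=
  Matrix.of fun ℓ j => ((ℓ : ℕ).choose j : ℝ) / (L.choose j : ℝ)

noncomputable def Tmat (L : ℕ) : Matrix (Fin (L+1)) (Fin (L+1)) ℝ :=
  Matrix.of fun i j =>
    ((L.choose i * L.factorial * (j : ℕ).factorial * (j : ℕ).choose i : ℕ) : ℝ)
      / ((L + (j : ℕ) + 1).factorial : ℝ)

noncomputable def Imat (L : ℕ) : Matrix (Fin (L+1)) (Fin (L+1)) ℝ :=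
  Matrix.of fun ℓ j =>
    ((L.choose ℓ * (L - (ℓ : ℕ)).factorial * ((ℓ : ℕ) + (j : ℕ)).factorial : ℕ) : ℝ)
      / ((L + (j : ℕ) + 1).factorial : ℝ)

lemma STlem (L : ℕ) : Smat L * Tmat L = Imat L := by
  ext ℓ j
  rw [Matrix.mul_apply]
  have hℓ : (ℓ : ℕ) ≤ L := Nat.lt_succ_iff.mp ℓ.isLt
  have hj : (j : ℕ) ≤ L := Nat.lt_succ_iff.mp j.isLt
  have hd : ((L + (j : ℕ) + 1).factorial : ℝ) ≠ 0 :=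
    Nat.cast_ne_zero.mpr (Nat.factorial_ne_zero _)
  have hterm : ∀ i : Fin (L+1), Smat L ℓ i * Tmat L i j
      = (((ℓ : ℕ).choose i * (j : ℕ).choose i : ℕ) : ℝ)
          * ((L.factorial * (j : ℕ).factorial : ℕ) : ℝ)
          / ((L + (j : ℕ) + 1).factorial : ℝ) := by
    intro i
    have hi : (i : ℕ) ≤ L := Nat.lt_succ_iff.mp i.isLt
    have hC : ((L.choose i : ℕ) : ℝ) ≠ 0 := Nat.cast_ne_zero.mpr (Nat.choose_pos hi).ne'
    simp only [Smat, Tmat, Matrix.of_apply]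
    push_cast
    field_simp
  rw [Finset.sum_congr rfl (fun i _ => hterm i)]
  rw [← Finset.sum_div, ← Finset.sum_mul]
  have hsum : ∑ i : Fin (L+1), (((ℓ : ℕ).choose i * (j : ℕ).choose i : ℕ) : ℝ)
      = ((((ℓ : ℕ) + (j : ℕ)).choose j : ℕ) : ℝ) := by
    rw [Fin.sum_univ_eq_sum_range (fun i => (((ℓ : ℕ).choose i * (j : ℕ).choose i : ℕ) : ℝ))
      (L+1)]
    rw [← Nat.cast_sum]
    exact_mod_cast congrArg (fun t : ℕ => (t : ℝ)) (key1 (ℓ : ℕ) (j : ℕ) L hj)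
  rw [hsum]
  simp only [Imat, Matrix.of_apply]
  have hnum : (((ℓ : ℕ) + (j : ℕ)).choose j : ℕ) * (L.factorial * (j : ℕ).factorial)
      = L.choose ℓ * (L - (ℓ : ℕ)).factorial * ((ℓ : ℕ) + (j : ℕ)).factorial := by
    have := key2 L (ℓ : ℕ) (j : ℕ) hℓ
    calc (((ℓ : ℕ) + (j : ℕ)).choose j : ℕ) * (L.factorial * (j : ℕ).factorial)
        = ((ℓ : ℕ) + (j : ℕ)).choose j * L.factorial * (j : ℕ).factorial := by ring
      _ = _ := this
  rw [div_eq_div_iff hd hd]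
  push_cast [← hnum]
  ring

lemma AS (L : ℕ) :
    (Matrix.of fun ℓ₁ ℓ₂ : Fin (L + 1) =>
        ∫ x in (0 : ℝ)..1, bern L ℓ₁ x * bern L ℓ₂ x) * Smat L = Imat L := by
  ext ℓ j
  rw [Matrix.mul_apply]
  have hℓ : (ℓ : ℕ) ≤ L := Nat.lt_succ_iff.mp ℓ.isLt
  have hj : (j : ℕ) ≤ L := Nat.lt_succ_iff.mp j.isLt
  have hCj : ((L.choose j : ℕ) : ℝ) ≠ 0 := Nat.cast_ne_zero.mpr (Nat.choose_pos hj).ne'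
  have big : ∑ i : Fin (L+1),
      (Matrix.of fun ℓ₁ ℓ₂ : Fin (L + 1) =>
        ∫ x in (0 : ℝ)..1, bern L ℓ₁ x * bern L ℓ₂ x) ℓ i * Smat L i j
      = ∫ x in (0 : ℝ)..1, bern L ℓ x * x ^ (j : ℕ) := by
    calc ∑ i : Fin (L+1),
        (Matrix.of fun ℓ₁ ℓ₂ : Fin (L + 1) =>
          ∫ x in (0 : ℝ)..1, bern L ℓ₁ x * bern L ℓ₂ x) ℓ i * Smat L i j
        = ∑ i : Fin (L+1), ∫ x in (0 : ℝ)..1, bern L ℓ x * bern L i x * Smat L i j := by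
          refine Finset.sum_congr rfl fun i _ => ?_
          simp only [Matrix.of_apply]
          rw [← intervalIntegral.integral_mul_const]
      _ = ∫ x in (0 : ℝ)..1, ∑ i : Fin (L+1), bern L ℓ x * bern L i x * Smat L i j := by
          rw [intervalIntegral.integral_finset_sum]
          intro i _
          exact (((bern_continuous L ℓ).mul (bern_continuous L i)).mul
            continuous_const).intervalIntegrable _ _
      _ = ∫ x in (0 : ℝ)..1, bern L ℓ x * x ^ (j : ℕ) := by
          apply intervalIntegral.integral_congr
          intro x _
          dsimp only
          have hs := sum_bern L (j : ℕ) hj x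
          calc ∑ i : Fin (L+1), bern L ℓ x * bern L i x * Smat L i j
              = (bern L ℓ x / (L.choose j : ℝ))
                  * ∑ i ∈ Finset.range (L+1), ((i.choose j : ℝ) * bern L i x) := by
                rw [Finset.mul_sum,
                  ← Fin.sum_univ_eq_sum_range
                    (fun i => bern L ℓ x / (L.choose j : ℝ) * ((i.choose j : ℝ) * bern L i x))
                    (L+1)]
                refine Finset.sum_congr rfl fun i _ => ?_
                simp only [Smat, Matrix.of_apply]
                ring
            _ = (bern L ℓ x / (L.choose j : ℝ)) * ((L.choose j : ℝ) * x ^ (j : ℕ)) := by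
                rw [hs]
            _ = bern L ℓ x * x ^ (j : ℕ) := by field_simp
  rw [big]
  calc ∫ x in (0 : ℝ)..1, bern L ℓ x * x ^ (j : ℕ)
      = (L.choose ℓ : ℝ)
          * ∫ x in (0 : ℝ)..1, x ^ ((ℓ : ℕ) + (j : ℕ)) * (1 - x) ^ (L - (ℓ : ℕ)) := by
        rw [← intervalIntegral.integral_const_mul]
        apply intervalIntegral.integral_congr
        intro x _
        dsimp only
        unfold bern
        rw [pow_add]
        ring
    _ = (L.choose ℓ : ℝ) * ((((ℓ : ℕ) + (j : ℕ)).factorial : ℝ) * ((L - (ℓ : ℕ)).factorial : ℝ)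
          / ((((ℓ : ℕ) + (j : ℕ)) + (L - (ℓ : ℕ)) + 1).factorial : ℝ)) := by
        rw [beta_nat]
    _ = Imat L ℓ j := by
        rw [show ((ℓ : ℕ) + (j : ℕ)) + (L - (ℓ : ℕ)) + 1 = L + (j : ℕ) + 1 from by omega]
        simp only [Imat, Matrix.of_apply]
        push_cast
        ring

/-- The eigenvalues of the Gram matrix
`{∫_0^1 B_{ℓ₁,L}(x) B_{ℓ₂,L}(x) dx}_{ℓ₁,ℓ₂=0}^{L}` of the Bernstein basis of
degree `L` are `λ_k = (1/(2L+1)) · C(2L+1, L−k) / C(2L, L)`, `k = 0, …, L`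
(stated via the characteristic polynomial, which factors accordingly). -/
theorem bernstein_gram_eigenvalues (L : ℕ) :
    (Matrix.of fun ℓ₁ ℓ₂ : Fin (L + 1) =>
        ∫ x in (0 : ℝ)..1, bern L ℓ₁ x * bern L ℓ₂ x).charpoly =
      ∏ k : Fin (L + 1),
        (Polynomial.X - Polynomial.C
          (1 / (2 * (L : ℝ) + 1) *
            ((2 * L + 1).choose (L - (k : ℕ)) : ℝ) / ((2 * L).choose L : ℝ))) := by
  have hdetS : IsUnit (Smat L).det := by
    have htri : (Smat L).BlockTriangular OrderDual.toDual := by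
      intro i j hij
      simp only [Smat, Matrix.of_apply]
      rw [Nat.choose_eq_zero_of_lt (show (i : ℕ) < (j : ℕ) from hij)]
      simp
    rw [Matrix.det_of_lowerTriangular (Smat L) htri]
    apply isUnit_iff_ne_zero.mpr
    apply Finset.prod_ne_zero_iff.mpr
    intro i _
    have hi : (i : ℕ) ≤ L := Nat.lt_succ_iff.mp i.isLt
    simp only [Smat, Matrix.of_apply, Nat.choose_self, Nat.cast_one]
    exact one_div_ne_zero (Nat.cast_ne_zero.mpr (Nat.choose_pos hi).ne')
  have hA : (Matrix.of fun ℓ₁ ℓ₂ : Fin (L + 1) =>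
        ∫ x in (0 : ℝ)..1, bern L ℓ₁ x * bern L ℓ₂ x)
      = Smat L * Tmat L * (Smat L)⁻¹ := by
    have h1 : (Matrix.of fun ℓ₁ ℓ₂ : Fin (L + 1) =>
        ∫ x in (0 : ℝ)..1, bern L ℓ₁ x * bern L ℓ₂ x) * Smat L = Smat L * Tmat L := by
      rw [AS L, STlem L]
    calc (Matrix.of fun ℓ₁ ℓ₂ : Fin (L + 1) =>
          ∫ x in (0 : ℝ)..1, bern L ℓ₁ x * bern L ℓ₂ x)
        = (Matrix.of fun ℓ₁ ℓ₂ : Fin (L + 1) =>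
            ∫ x in (0 : ℝ)..1, bern L ℓ₁ x * bern L ℓ₂ x) * (Smat L * (Smat L)⁻¹) := by
          rw [Matrix.mul_nonsing_inv _ hdetS, Matrix.mul_one]
      _ = Smat L * Tmat L * (Smat L)⁻¹ := by
          rw [← Matrix.mul_assoc, h1]
  have hTtri : (Tmat L).BlockTriangular id := by
    intro i j hij
    simp only [Tmat, Matrix.of_apply]
    rw [Nat.choose_eq_zero_of_lt (show (j : ℕ) < (i : ℕ) from hij)]
    simp
  rw [hA, charpoly_similar _ _ hdetS, Matrix.charpoly_of_upperTriangular _ hTtri]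
  apply Finset.prod_congr rfl
  intro k _
  congr 1
  have hk : (k : ℕ) ≤ L := Nat.lt_succ_iff.mp k.isLt
  simp only [Tmat, Matrix.of_apply, Nat.choose_self, mul_one]
  have h3 := key3 L (k : ℕ) hk
  have d1 : ((L + (k : ℕ) + 1).factorial : ℝ) ≠ 0 :=
    Nat.cast_ne_zero.mpr (Nat.factorial_ne_zero _)
  have d2 : (2 * (L : ℝ) + 1) ≠ 0 := by positivity
  have d3 : (((2 * L).choose L : ℕ) : ℝ) ≠ 0 :=
    Nat.cast_ne_zero.mpr (Nat.choose_pos (by omega)).ne'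
  have h3' : (L.choose k : ℝ) * L.factorial * (k : ℕ).factorial
        * ((2 * (L : ℝ) + 1) * ((2 * L).choose L : ℝ))
      = ((2 * L + 1).choose (L - (k : ℕ)) : ℝ) * ((L + (k : ℕ) + 1).factorial : ℝ) := by
    exact_mod_cast congrArg (fun t : ℕ => (t : ℝ)) h3
  rw [Polynomial.C_inj]
  push_cast
  field_simp
  linear_combination h3'
end

section
/- The rank-one pseudoinverse update holds for the Gram matrices A_{n,k} = ∑_{j=k}^{n} P_j P_jᵀ: if A_{n,k} = A_{n,k+1} + P_k P_kᵀ with P_k in the column space of A_{n,k+1} and 1 + P_kᵀ A_{n,k+1}⁺ P_k ≠ 0, then A_{n,k}⁻¹-type update A_{n,k}⁺ = A_{n,k+1}⁺ − (A_{n,k+1}⁺ P_k P_kᵀ A_{n,k+1}⁺)/(1 + P_kᵀ A_{n,k+1}⁺ P_k) holds (Sherman–Morrison for pseudoinverses under the range condition). -/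
open Matrix

lemma sm_mul_vecMulVec {L : ℕ} (M : Matrix (Fin L) (Fin L) ℝ) (v w : Fin L → ℝ) :
    M * vecMulVec v w = vecMulVec (M.mulVec v) w := by
  ext i j
  simp [mul_apply, vecMulVec_apply, mulVec, dotProduct, Finset.sum_mul, mul_assoc]

lemma sm_vecMulVec_mul {L : ℕ} (v w : Fin L → ℝ) (M : Matrix (Fin L) (Fin L) ℝ) :
    vecMulVec v w * M = vecMulVec v (vecMul w M) := by
  ext i j
  simp [mul_apply, vecMulVec_apply, vecMul, dotProduct, Finset.mul_sum, mul_assoc]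

lemma sm_vecMulVec_transpose {L : ℕ} (v w : Fin L → ℝ) :
    (vecMulVec v w)ᵀ = vecMulVec w v := by
  ext i j; simp [vecMulVec_apply, mul_comm]

lemma sm_vecMulVec_mul_vecMulVec {L : ℕ} (a b c d : Fin L → ℝ) :
    vecMulVec a b * vecMulVec c d = (b ⬝ᵥ c) • vecMulVec a d := by
  ext i j
  simp only [mul_apply, vecMulVec_apply, Matrix.smul_apply, smul_eq_mul, dotProduct,
    Finset.sum_mul]
  apply Finset.sum_congr rfl
  intros; ring

lemma sm_pinv_unique {L : ℕ} (A X Y : Matrix (Fin L) (Fin L) ℝ)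
    (hX1 : A * X * A = A) (hX2 : X * A * X = X)
    (hX3 : (A * X)ᵀ = A * X) (hX4 : (X * A)ᵀ = X * A)
    (hY1 : A * Y * A = A) (hY2 : Y * A * Y = Y)
    (hY3 : (A * Y)ᵀ = A * Y) (hY4 : (Y * A)ᵀ = Y * A) : X = Y := by
  have hAX : A * X = A * Y := by
    calc A * X = (A * X)ᵀ := hX3.symm
    _ = Xᵀ * Aᵀ := by rw [transpose_mul]
    _ = Xᵀ * (A * Y * A)ᵀ := by rw [hY1]
    _ = Xᵀ * (Aᵀ * (A * Y)ᵀ) := by rw [transpose_mul]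
    _ = (A * X)ᵀ * (A * Y)ᵀ := by simp only [transpose_mul, mul_assoc]
    _ = (A * X) * (A * Y) := by rw [hX3, hY3]
    _ = (A * X * A) * Y := by noncomm_ring
    _ = A * Y := by rw [hX1]
  have hXA : X * A = Y * A := by
    calc X * A = (X * A)ᵀ := hX4.symm
    _ = Aᵀ * Xᵀ := by rw [transpose_mul]
    _ = (A * Y * A)ᵀ * Xᵀ := by rw [hY1]
    _ = (Y * A)ᵀ * (X * A)ᵀ := by simp only [transpose_mul, mul_assoc]
    _ = (Y * A) * (X * A) := by rw [hX4, hY4]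
    _ = Y * (A * X * A) := by noncomm_ring
    _ = Y * A := by rw [hX1]
  calc X = X * A * X := hX2.symm
  _ = X * (A * Y) := by rw [mul_assoc, hAX]
  _ = (Y * A) * Y := by rw [← mul_assoc, hXA]
  _ = Y := hY2

/-- Sherman–Morrison rank-one pseudoinverse update for the Gram matrices
`A_{n,k} = ∑_{j=k}^{n} P_j P_jᵀ`: if `A_{n,k} = A_{n,k+1} + P_k P_kᵀ` with
`P_k` in the column space of `A_{n,k+1}` and `1 + P_kᵀ A_{n,k+1}⁺ P_k ≠ 0`,
then `A_{n,k}⁺ = A_{n,k+1}⁺ − (A_{n,k+1}⁺ P_k P_kᵀ A_{n,k+1}⁺)/(1 + P_kᵀ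
A_{n,k+1}⁺ P_k)`. Pseudoinverses are characterized by the Penrose conditions. -/
theorem gram_pinv_rank_one_update (L n k : ℕ) (hk : k ≤ n) (P : ℕ → Fin L → ℝ)
    (A A' B B' : Matrix (Fin L) (Fin L) ℝ)
    (hA : A = ∑ j ∈ Finset.Icc (k + 1) n, vecMulVec (P j) (P j))
    (hA' : A' = ∑ j ∈ Finset.Icc k n, vecMulVec (P j) (P j))
    (hB₁ : A * B * A = A) (hB₂ : B * A * B = B)
    (hB₃ : (A * B)ᵀ = A * B) (hB₄ : (B * A)ᵀ = B * A)
    (hB'₁ : A' * B' * A' = A') (hB'₂ : B' * A' * B' = B')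
    (hB'₃ : (A' * B')ᵀ = A' * B') (hB'₄ : (B' * A')ᵀ = B' * A')
    (hrange : ∃ w, A.mulVec w = P k)
    (hden : 1 + P k ⬝ᵥ B.mulVec (P k) ≠ 0) :
    B' = B - (1 + P k ⬝ᵥ B.mulVec (P k))⁻¹ •
      (B * vecMulVec (P k) (P k) * B) := by
  obtain ⟨w, hw⟩ := hrange
  set v := P k with hv
  set Q : Matrix (Fin L) (Fin L) ℝ := vecMulVec v v with hQ
  set t : ℝ := v ⬝ᵥ B.mulVec v with ht
  set c : ℝ := 1 + t with hc
  set C : Matrix (Fin L) (Fin L) ℝ := B - c⁻¹ • (B * Q * B) with hC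
  -- split the Gram sum
  have hsplit : A' = Q + A := by
    rw [hA', hA, Finset.Icc_eq_cons_Ioc hk, Finset.sum_cons, Finset.Icc_add_one_left_eq_Ioc]
  -- symmetry of A and A'
  have hAT : Aᵀ = A := by
    rw [hA, transpose_sum]
    exact Finset.sum_congr rfl fun j _ => sm_vecMulVec_transpose _ _
  have hA'T : A'ᵀ = A' := by
    rw [hA', transpose_sum]
    exact Finset.sum_congr rfl fun j _ => sm_vecMulVec_transpose _ _
  -- symmetry of B, via uniqueness of the pseudoinverse
  have hT1 : A * Bᵀ * A = A := by
    have h := congrArg transpose hB₁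
    simp only [transpose_mul, hAT, ← mul_assoc] at h
    exact h
  have hT2 : Bᵀ * A * Bᵀ = Bᵀ := by
    have h := congrArg transpose hB₂
    simp only [transpose_mul, hAT, ← mul_assoc] at h
    exact h
  have hT3 : (A * Bᵀ)ᵀ = A * Bᵀ := by
    calc (A * Bᵀ)ᵀ = B * A := by rw [transpose_mul, transpose_transpose, hAT]
    _ = (B * A)ᵀ := hB₄.symm
    _ = Aᵀ * Bᵀ := by rw [transpose_mul]
    _ = A * Bᵀ := by rw [hAT]
  have hT4 : (Bᵀ * A)ᵀ = Bᵀ * A := by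
    calc (Bᵀ * A)ᵀ = Aᵀ * B := by rw [transpose_mul, transpose_transpose]
    _ = A * B := by rw [hAT]
    _ = (A * B)ᵀ := hB₃.symm
    _ = Bᵀ * Aᵀ := by rw [transpose_mul]
    _ = Bᵀ * A := by rw [hAT]
  have hBT : Bᵀ = B := sm_pinv_unique A Bᵀ B hT1 hT2 hT3 hT4 hB₁ hB₂ hB₃ hB₄
  have hcomm : B * A = A * B := by
    rw [← hB₃, transpose_mul, hBT, hAT]
  -- key identities
  have hABv : (A * B).mulVec v = v := by
    calc (A * B).mulVec v = (A * B).mulVec (A.mulVec w) := by rw [hw]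
    _ = (A * B * A).mulVec w := by rw [mulVec_mulVec]
    _ = v := by rw [hB₁, hw]
  have hABQ : A * B * Q = Q := by
    rw [hQ, sm_mul_vecMulVec, hABv]
  have hQBQ : Q * B * Q = t • Q := by
    rw [hQ, sm_vecMulVec_mul, sm_vecMulVec_mul_vecMulVec]
    congr 1
    rw [ht, dotProduct_mulVec]
  have hABB : A * B * B = B := by rw [← hcomm]; exact hB₂
  -- the central computation : A' * C = A * B
  have key : A' * C = A * B := by
    have e1 : A * (B * Q * B) = Q * B := by
      rw [← mul_assoc, ← mul_assoc, hABQ]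
    have e2 : Q * (B * Q * B) = t • (Q * B) := by
      rw [← mul_assoc, ← mul_assoc, hQBQ, Matrix.smul_mul]
    have hsum : c⁻¹ • (t • (Q * B)) + c⁻¹ • (Q * B) = Q * B := by
      rw [smul_smul, ← add_smul]
      have h1 : c⁻¹ * t + c⁻¹ = 1 := by
        have h2 : c⁻¹ * c = 1 := inv_mul_cancel₀ hden
        calc c⁻¹ * t + c⁻¹ = c⁻¹ * (1 + t) := by ring
        _ = 1 := by rw [← hc]; exact h2
      rw [h1, one_smul]
    calc A' * C = (Q + A) * (B - c⁻¹ • (B * Q * B)) := by rw [hsplit, hC]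
    _ = Q * B + A * B - (c⁻¹ • (Q * (B * Q * B)) + c⁻¹ • (A * (B * Q * B))) := by
        simp only [mul_sub, add_mul, Matrix.mul_smul]
    _ = Q * B + A * B - (c⁻¹ • (t • (Q * B)) + c⁻¹ • (Q * B)) := by rw [e1, e2]
    _ = Q * B + A * B - Q * B := by rw [hsum]
    _ = A * B := by abel
  have hCT : Cᵀ = C := by
    rw [hC]
    simp only [transpose_sub, transpose_smul, transpose_mul, hBT, hQ,
      sm_vecMulVec_transpose, mul_assoc]
  have key2 : C * A' = A * B := by
    calc C * A' = (A'ᵀ * Cᵀ)ᵀ := by rw [← transpose_mul, transpose_transpose]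
    _ = (A' * C)ᵀ := by rw [hA'T, hCT]
    _ = A * B := by rw [key, hB₃]
  -- Penrose conditions for C
  have p1 : A' * C * A' = A' := by
    rw [key, hsplit, mul_add, hABQ, hB₁]
  have p2 : C * A' * C = C := by
    rw [key2, hC, mul_sub, Matrix.mul_smul, ← mul_assoc, ← mul_assoc, hABB]
  have p3 : (A' * C)ᵀ = A' * C := by rw [key, hB₃]
  have p4 : (C * A')ᵀ = C * A' := by rw [key2, hB₃]
  exact sm_pinv_unique A' B' C hB'₁ hB'₂ hB'₃ hB'₄ p1 p2 p3 p4
end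

section
/- Let u_1, …, u_n be square-integrable, with v_i = u_i − P_iᵀ A_{n,i}⁺ C_{n,i}, where C_{n,i} = (1/n)∑_{k≥i} P_k u_k and A_{n,i} = (1/n)∑_{k≥i} P_k P_kᵀ, and suppose the u_i are independent mean-zero with common variance σ² and independent of the (deterministic) vectors P_k. Then for i < j, E[v_i v_j] = (σ²/n)(P_iᵀ A_{n,i}⁺ A_{n,j} A_{n,j}⁺ P_j − P_iᵀ A_{n,i}⁺ P_j) = 0, i.e. the recursive residuals v_i are uncorrelated. -/
open Matrix MeasureTheory ProbabilityTheory

lemma aux_mul_vecMulVec_mul {L : ℕ} (M N : Matrix (Fin L) (Fin L) ℝ) (x y : Fin L → ℝ) :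
    M * vecMulVec x y * N = vecMulVec (M.mulVec x) (Nᵀ.mulVec y) := by
  ext a b
  simp only [Matrix.mul_apply, vecMulVec_apply, Matrix.mulVec, dotProduct,
    Matrix.transpose_apply, Finset.sum_mul, Finset.mul_sum]
  apply Finset.sum_congr rfl; intro c _
  apply Finset.sum_congr rfl; intro d _
  ring

lemma proj_aux {n L : ℕ} {P : Fin n → Fin L → ℝ} {j : Fin n}
    {A M : Matrix (Fin L) (Fin L) ℝ}
    (hA : A = (n : ℝ)⁻¹ •
      ∑ k ∈ Finset.univ.filter (fun k : Fin n => j ≤ k), vecMulVec (P k) (P k))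
    (hM : Mᵀ = M) (hMA : M * A = 0) :
    ∀ k : Fin n, j ≤ k → M.mulVec (P k) = 0 := by
  have hn : (0:ℝ) < n := by exact_mod_cast j.pos
  have hMAM : M * A * M = 0 := by rw [hMA, zero_mul]
  rw [hA] at hMAM
  have hexp : M * ((n : ℝ)⁻¹ •
      ∑ k ∈ Finset.univ.filter (fun k : Fin n => j ≤ k), vecMulVec (P k) (P k)) * M
      = (n : ℝ)⁻¹ • ∑ k ∈ Finset.univ.filter (fun k : Fin n => j ≤ k),
          vecMulVec (M.mulVec (P k)) (M.mulVec (P k)) := by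
    rw [Matrix.mul_smul, Matrix.smul_mul, Finset.mul_sum, Finset.sum_mul]
    congr 1
    apply Finset.sum_congr rfl; intro k _
    rw [aux_mul_vecMulVec_mul, hM]
  rw [hexp] at hMAM
  intro k hk
  funext l
  have hdiag : ∑ k ∈ Finset.univ.filter (fun k : Fin n => j ≤ k),
      (M.mulVec (P k) l) ^ 2 = 0 := by
    have := congrFun (congrFun hMAM l) l
    simp only [Matrix.smul_apply, Finset.sum_apply, Matrix.sum_apply, vecMulVec_apply,
      Matrix.zero_apply, smul_eq_mul] at this
    have h2 : ∑ k ∈ Finset.univ.filter (fun k : Fin n => j ≤ k),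
        (M.mulVec (P k) l) ^ 2 = ∑ k ∈ Finset.univ.filter (fun k : Fin n => j ≤ k),
        M.mulVec (P k) l * M.mulVec (P k) l := by
      apply Finset.sum_congr rfl; intros; ring
    rw [h2]
    have hne : ((n:ℝ)⁻¹) ≠ 0 := by positivity
    exact (mul_eq_zero.mp this).resolve_left hne
  have hz := (Finset.sum_eq_zero_iff_of_nonneg (fun k _ => sq_nonneg _)).mp hdiag
  have := hz k (by simp [hk])
  simpa using pow_eq_zero_iff (n := 2) (by norm_num) |>.mp this

lemma integral_comb {Ω : Type*} [MeasurableSpace Ω] (μ : Measure Ω) [IsProbabilityMeasure μ]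
    {n : ℕ} (u : Fin n → Ω → ℝ) (σ : ℝ)
    (hindep : iIndepFun u μ)
    (hL2 : ∀ i, MemLp (u i) 2 μ)
    (hmean : ∀ i, ∫ ω, u i ω ∂μ = 0)
    (hvar : ∀ i, ∫ ω, (u i ω) ^ 2 ∂μ = σ ^ 2)
    (a b : Fin n → ℝ) :
    ∫ ω, (∑ k, a k * u k ω) * (∑ k, b k * u k ω) ∂μ = σ ^ 2 * ∑ k, a k * b k := by
  have hint : ∀ k l : Fin n, Integrable (fun ω => u k ω * u l ω) μ := by
    intro k l
    have h := (hL2 l).smul (hL2 k) (p := 2) (q := 2) (r := 1)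
      (hpqr := ⟨by rw [inv_one, ENNReal.inv_two_add_inv_two]⟩)
    have := memLp_one_iff_integrable.mp h
    exact this
  have hUU : ∀ k l : Fin n, ∫ ω, u k ω * u l ω ∂μ = if k = l then σ ^ 2 else 0 := by
    intro k l
    by_cases h : k = l
    · subst h; rw [if_pos rfl, ← hvar k]
      apply integral_congr_ae; filter_upwards with ω; ring
    · rw [if_neg h]
      have hi := (hindep.indepFun h).integral_mul_eq_mul_integral
        ((hL2 k).aestronglyMeasurable) ((hL2 l).aestronglyMeasurable)
      have heq : (fun ω => u k ω * u l ω) = u k * u l := rfl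
      rw [heq, hi, hmean k, hmean l, mul_zero]
  have hsplit : ∀ ω, (∑ k, a k * u k ω) * (∑ k, b k * u k ω)
      = ∑ k, ∑ l, (a k * b l) * (u k ω * u l ω) := by
    intro ω
    rw [Finset.sum_mul_sum]
    apply Finset.sum_congr rfl; intros
    apply Finset.sum_congr rfl; intros
    ring
  simp only [hsplit]
  rw [integral_finset_sum _ (fun k _ => integrable_finset_sum _
    (fun l _ => (hint k l).const_mul _))]
  have : ∀ k : Fin n, ∫ ω, ∑ l, (a k * b l) * (u k ω * u l ω) ∂μ
      = ∑ l, (a k * b l) * ∫ ω, u k ω * u l ω ∂μ := by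
    intro k
    rw [integral_finset_sum _ (fun l _ => (hint k l).const_mul _)]
    exact Finset.sum_congr rfl fun l _ => integral_const_mul _ _
  simp only [this, hUU, mul_ite, mul_zero, Finset.sum_ite_eq, Finset.mem_univ, if_pos]
  rw [Finset.mul_sum]
  exact Finset.sum_congr rfl fun k _ => by ring

lemma dot_vecMulVec_mulVec {L : ℕ} (z x y w : Fin L → ℝ) :
    z ⬝ᵥ (vecMulVec x y *ᵥ w) = (z ⬝ᵥ x) * (y ⬝ᵥ w) := by
  simp only [Matrix.mulVec, dotProduct, vecMulVec_apply, Finset.mul_sum,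
    Finset.sum_mul]
  conv_rhs => rw [Finset.sum_comm]
  apply Finset.sum_congr rfl; intro a _
  apply Finset.sum_congr rfl; intro b _
  ring

lemma sum_dot_helper {n L : ℕ} (s : Finset (Fin n)) (P : Fin n → Fin L → ℝ) (z w : Fin L → ℝ) :
    ∑ k ∈ s, (z ⬝ᵥ P k) * (w ⬝ᵥ P k) = z ⬝ᵥ (∑ k ∈ s, vecMulVec (P k) (P k)) *ᵥ w := by
  classical
  induction s using Finset.induction_on with
  | empty => simp
  | insert _ _ ha ih =>
    rw [Finset.sum_insert ha, Finset.sum_insert ha, Matrix.add_mulVec,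
      dotProduct_add, ih, dot_vecMulVec_mulVec, dotProduct_comm w]

lemma dot_mulVec_comb {L n : ℕ} (p : Fin L → ℝ) (M : Matrix (Fin L) (Fin L) ℝ) (c : ℝ)
    (s : Finset (Fin n)) (f : Fin n → ℝ) (g : Fin n → Fin L → ℝ) :
    p ⬝ᵥ M.mulVec (c • ∑ k ∈ s, f k • g k) = c * ∑ k ∈ s, f k * (p ⬝ᵥ M.mulVec (g k)) := by
  classical
  induction s using Finset.induction_on with
  | empty => simp
  | insert _ _ ha ih =>
    rw [Finset.sum_insert ha, Finset.sum_insert ha, smul_add, Matrix.mulVec_add,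
      dotProduct_add, mul_add, ← ih, Matrix.mulVec_smul, Matrix.mulVec_smul,
      dotProduct_smul, dotProduct_smul, smul_eq_mul, smul_eq_mul]

/-- Recursive residuals are uncorrelated: with `v_i = u_i − P_iᵀ A_{n,i}⁺ C_{n,i}`,
where `C_{n,i} = (1/n)∑_{k≥i} P_k u_k` and `A_{n,i} = (1/n)∑_{k≥i} P_k P_kᵀ`,
and `u_i` independent mean-zero with common variance `σ²` (square-integrable)
and independent of the deterministic vectors `P_k`, one has for `i < j`
`E[v_i v_j] = (σ²/n)(P_iᵀ A_{n,i}⁺ A_{n,j} A_{n,j}⁺ P_j − P_iᵀ A_{n,i}⁺ P_j) = 0`.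
The pseudoinverses `B i = A_{n,i}⁺` are characterized by the Penrose
conditions. -/
theorem recursive_residuals_uncorrelated
    {Ω : Type*} [MeasurableSpace Ω] (μ : Measure Ω) [IsProbabilityMeasure μ]
    (n L : ℕ) (P : Fin n → Fin L → ℝ) (u : Fin n → Ω → ℝ) (σ : ℝ)
    (hindep : iIndepFun u μ)
    (hL2 : ∀ i, MemLp (u i) 2 μ)
    (hmean : ∀ i, ∫ ω, u i ω ∂μ = 0)
    (hvar : ∀ i, ∫ ω, (u i ω) ^ 2 ∂μ = σ ^ 2)
    (A B : Fin n → Matrix (Fin L) (Fin L) ℝ)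
    (hA : ∀ i, A i = (n : ℝ)⁻¹ •
      ∑ k ∈ Finset.univ.filter (fun k => i ≤ k), vecMulVec (P k) (P k))
    (hB₁ : ∀ i, A i * B i * A i = A i) (hB₂ : ∀ i, B i * A i * B i = B i)
    (hB₃ : ∀ i, (A i * B i)ᵀ = A i * B i) (hB₄ : ∀ i, (B i * A i)ᵀ = B i * A i)
    (C : Fin n → Ω → Fin L → ℝ)
    (hC : ∀ i ω, C i ω = (n : ℝ)⁻¹ •
      ∑ k ∈ Finset.univ.filter (fun k => i ≤ k), u k ω • P k)
    (v : Fin n → Ω → ℝ)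
    (hv : ∀ i ω, v i ω = u i ω - P i ⬝ᵥ (B i).mulVec (C i ω)) :
    ∀ i j : Fin n, i < j →
      (∫ ω, v i ω * v j ω ∂μ) =
        σ ^ 2 / n *
          (P i ⬝ᵥ (B i * A j * B j).mulVec (P j) - P i ⬝ᵥ (B i).mulVec (P j)) ∧
      (∫ ω, v i ω * v j ω ∂μ) = 0 := by
  classical
  intro i j hij
  have hn : (0:ℝ) < n := by exact_mod_cast i.pos
  set d : Fin n → Fin n → ℝ := fun a k => P a ⬝ᵥ (B a).mulVec (P k) with hd
  set coef : Fin n → Fin n → ℝ := fun a k =>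
    (if k = a then 1 else 0) - (if a ≤ k then (n:ℝ)⁻¹ * d a k else 0) with hcoef
  -- express v as linear combination
  have hvsum : ∀ a ω, v a ω = ∑ k, coef a k * u k ω := by
    intro a ω
    rw [hv, hC, dot_mulVec_comb]
    have h1 : ∑ k, coef a k * u k ω
        = u a ω - ∑ k ∈ Finset.univ.filter (fun k => a ≤ k),
            (n:ℝ)⁻¹ * d a k * u k ω := by
      simp only [hcoef, sub_mul, ite_mul, one_mul, zero_mul]
      rw [Finset.sum_sub_distrib, Finset.sum_ite_eq' Finset.univ a (fun k => u k ω),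
        Finset.sum_filter]
      simp
    rw [h1]
    congr 1
    rw [Finset.mul_sum]
    apply Finset.sum_congr rfl; intro k _
    simp only [hd]; ring
  -- the integral
  have hI : ∫ ω, v i ω * v j ω ∂μ = σ^2 * ∑ k, coef i k * coef j k := by
    calc ∫ ω, v i ω * v j ω ∂μ
        = ∫ ω, (∑ k, coef i k * u k ω) * (∑ k, coef j k * u k ω) ∂μ := by
          simp only [hvsum]
      _ = σ^2 * ∑ k, coef i k * coef j k :=
          integral_comb μ u σ hindep hL2 hmean hvar _ _
  -- symmetry of A
  have hAT : ∀ a, (A a)ᵀ = A a := by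
    intro a
    ext x y
    rw [Matrix.transpose_apply, hA a]
    simp only [Matrix.smul_apply, Matrix.sum_apply, vecMulVec_apply, smul_eq_mul]
    congr 1
    exact Finset.sum_congr rfl fun k _ => mul_comm _ _
  -- projections
  have hABP : (A j * B j) *ᵥ (P j) = P j := by
    have hM : (1 - A j * B j)ᵀ = 1 - A j * B j := by
      rw [Matrix.transpose_sub, Matrix.transpose_one, hB₃ j]
    have hMA : (1 - A j * B j) * A j = 0 := by
      rw [Matrix.sub_mul, Matrix.one_mul, hB₁ j, sub_self]
    have h := proj_aux (hA j) hM hMA j le_rfl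
    rw [Matrix.sub_mulVec, Matrix.one_mulVec, sub_eq_zero] at h
    exact h.symm
  have hBAA : (B j * A j) * A j = A j := by
    have h1 : B j * A j = A j * (B j)ᵀ := by
      rw [← hB₄ j, Matrix.transpose_mul, hAT j]
    have h2 : A j * ((B j)ᵀ * A j) = A j := by
      have h3 := congrArg Matrix.transpose (hB₁ j)
      rwa [Matrix.transpose_mul, Matrix.transpose_mul, hAT j] at h3
    rw [h1, Matrix.mul_assoc]
    exact h2
  have hBAP : (B j * A j) *ᵥ (P j) = P j := by
    have hM : (1 - B j * A j)ᵀ = 1 - B j * A j := by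
      rw [Matrix.transpose_sub, Matrix.transpose_one, hB₄ j]
    have hMA : (1 - B j * A j) * A j = 0 := by
      rw [Matrix.sub_mul, Matrix.one_mul, hBAA, sub_self]
    have h := proj_aux (hA j) hM hMA j le_rfl
    rw [Matrix.sub_mulVec, Matrix.one_mulVec, sub_eq_zero] at h
    exact h.symm
  -- RHS matrix expression collapses
  have hRHS : P i ⬝ᵥ (B i * A j * B j) *ᵥ (P j) = P i ⬝ᵥ (B i) *ᵥ (P j) := by
    rw [Matrix.mul_assoc, ← Matrix.mulVec_mulVec, hABP]
  -- key sum identity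
  have hsum2 : ∑ k ∈ Finset.univ.filter (fun k : Fin n => j ≤ k), d i k * d j k
      = n * d i j := by
    have hz : ∀ a k : Fin n, d a k = (P a ᵥ* B a) ⬝ᵥ P k := by
      intro a k; simp only [hd]; rw [dotProduct_mulVec]
    calc ∑ k ∈ Finset.univ.filter (fun k : Fin n => j ≤ k), d i k * d j k
        = ∑ k ∈ Finset.univ.filter (fun k : Fin n => j ≤ k),
            ((P i ᵥ* B i) ⬝ᵥ P k) * ((P j ᵥ* B j) ⬝ᵥ P k) := by
          apply Finset.sum_congr rfl; intro k _; rw [hz i k, hz j k]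
      _ = (P i ᵥ* B i) ⬝ᵥ (∑ k ∈ Finset.univ.filter (fun k : Fin n => j ≤ k),
            vecMulVec (P k) (P k)) *ᵥ (P j ᵥ* B j) := sum_dot_helper _ _ _ _
      _ = (P i ᵥ* B i) ⬝ᵥ ((n:ℝ) • A j) *ᵥ (P j ᵥ* B j) := by
          have hAsum : ∑ k ∈ Finset.univ.filter (fun k : Fin n => j ≤ k),
              vecMulVec (P k) (P k) = (n:ℝ) • A j := by
            rw [hA j, smul_smul, mul_inv_cancel₀ hn.ne', one_smul]
          rw [hAsum]
      _ = n * ((P i ᵥ* B i) ⬝ᵥ (A j) *ᵥ (P j ᵥ* B j)) := by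
          rw [Matrix.smul_mulVec, dotProduct_smul, smul_eq_mul]
      _ = n * ((P i ᵥ* B i) ⬝ᵥ P j) := by
          rw [Matrix.mulVec_vecMul]
          have hcomm : A j * (B j)ᵀ = B j * A j := by
            conv_lhs => rw [← hAT j]
            rw [← Matrix.transpose_mul, hB₄ j]
          rw [hcomm, hBAP]
      _ = n * d i j := by rw [← hz i j]
  -- the coefficient sum vanishes
  have hT : ∑ k, coef i k * coef j k = 0 := by
    have h1 : ∑ k, coef i k * coef j k
        = ∑ k ∈ Finset.univ.filter (fun k : Fin n => j ≤ k), coef i k * coef j k := by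
      rw [Finset.sum_filter]
      apply Finset.sum_congr rfl
      intro k _
      by_cases h : j ≤ k
      · rw [if_pos h]
      · have hkj : ¬ k = j := by rintro rfl; exact h le_rfl
        have : coef j k = 0 := by simp only [hcoef]; rw [if_neg hkj, if_neg h, sub_zero]
        rw [if_neg h, this, mul_zero]
    have h2 : ∑ k ∈ Finset.univ.filter (fun k : Fin n => j ≤ k), coef i k * coef j k
        = ∑ k ∈ Finset.univ.filter (fun k : Fin n => j ≤ k),
            (-((n:ℝ)⁻¹ * d i k) * (if k = j then 1 else 0)
              + (n:ℝ)⁻¹ * (n:ℝ)⁻¹ * (d i k * d j k)) := by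
      apply Finset.sum_congr rfl
      intro k hk
      rw [Finset.mem_filter] at hk
      have hjk : j ≤ k := hk.2
      have hik : i ≤ k := le_trans (le_of_lt hij) hjk
      have hki : ¬ k = i := fun h => (not_le.mpr hij) (h ▸ hjk)
      simp only [hcoef]
      rw [if_neg hki, if_pos hik, if_pos hjk]
      ring
    rw [h1, h2, Finset.sum_add_distrib]
    have h3 : ∑ k ∈ Finset.univ.filter (fun k : Fin n => j ≤ k),
        -((n:ℝ)⁻¹ * d i k) * (if k = j then 1 else 0) = -((n:ℝ)⁻¹ * d i j) := by
      have : ∀ k, -((n:ℝ)⁻¹ * d i k) * (if k = j then 1 else 0)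
          = if k = j then -((n:ℝ)⁻¹ * d i k) else 0 := by
        intro k; by_cases h : k = j <;> simp [h]
      simp only [this]
      rw [Finset.sum_ite_eq' _ j (fun k => -((n:ℝ)⁻¹ * d i k))]
      rw [if_pos (by simp)]
    have h4 : ∑ k ∈ Finset.univ.filter (fun k : Fin n => j ≤ k),
        (n:ℝ)⁻¹ * (n:ℝ)⁻¹ * (d i k * d j k) = (n:ℝ)⁻¹ * (n:ℝ)⁻¹ * (n * d i j) := by
      rw [← Finset.mul_sum, hsum2]
    rw [h3, h4]
    field_simp
    ring
  refine ⟨?_, ?_⟩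
  · rw [hI, hT, mul_zero, hRHS, sub_self, mul_zero]
  · rw [hI, hT, mul_zero]
end
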